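/- arXiv:2102.05363 — 4 statements merged into one kernel-verified Lean document; each statement's English description precedes it below -/
import Mathlib

section
/- Let C > 0. For a vector x ∈ ℝ^n with ‖x‖_∞ ≤ C, and any index j and constant c, the function x ↦ ‖x − w‖_∞ − 2C + c with w_j = −2C and w_i = 0 for i ≠ j equals x_j + c; that is, the ℓ∞-dist neuron can realize the projection map. -/
/-- Projection map realized by an ℓ∞-dist neuron: for `‖x‖_∞ ≤ C`, taking the
weight vector `w` with `w_j = −2C` and `w_i = 0` otherwise,
`‖x − w‖_∞ − 2C + c = x_j + c`. -/
theorem linf_neuron_projection_map (n : ℕ) (C : ℝ) (hC : 0 < C)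
    (x : Fin n → ℝ) (hx : ‖x‖ ≤ C) (j : Fin n) (c : ℝ) :
    ‖x - (fun i => if i = j then -2 * C else 0)‖ - 2 * C + c = x j + c := by
  have hxi : ∀ i, |x i| ≤ C := fun i => (norm_le_pi_norm x i).trans hx
  have hj : |x j| ≤ C := hxi j
  have h1 : -C ≤ x j := (abs_le.mp hj).1
  have key : ‖x - (fun i => if i = j then -2 * C else 0)‖ = x j + 2 * C := by
    apply le_antisymm
    · apply pi_norm_le_iff_of_nonneg (by linarith) |>.mpr
      intro i
      simp only [Pi.sub_apply]
      by_cases h : i = j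
      · subst h
        rw [if_pos rfl, Real.norm_eq_abs]
        rw [abs_of_nonneg (by linarith)]
        linarith
      · rw [if_neg h, sub_zero, Real.norm_eq_abs]
        have := abs_le.mp (hxi i)
        rw [abs_le]
        constructor <;> linarith
    · have := norm_le_pi_norm (x - (fun i => if i = j then -2 * C else 0)) j
      simp only [Pi.sub_apply, if_pos rfl] at this
      calc x j + 2 * C = |x j - (-2 * C)| := by
            rw [abs_of_nonneg (by linarith)]; ring
        _ ≤ _ := this
  rw [key]; ring
end

section
/- Let x ∈ ℝ^n with ‖x‖_∞ ≤ C (C > 0), and let j be an index, c a constant. Setting w_j = 2C and w_i = 0 for i ≠ j, the ℓ∞-dist neuron output ‖x − w‖_∞ − 2C + c equals −x_j + c. -/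
theorem Pi.norm_sub_single_eq_of_norm_add_le {ι : Type*} [Fintype ι] [DecidableEq ι]
    (x : ι → ℝ) (j : ι) {a : ℝ} (ha : ‖x‖ + x j ≤ a) :
    ‖x - Pi.single j a‖ = a - x j := by
  have hnorm_le : ‖x‖ ≤ a - x j := by linarith
  have hcoord_j : ‖(x - Pi.single j a : ι → ℝ) j‖ = a - x j := by
    rw [Pi.sub_apply, Pi.single_eq_same, Real.norm_eq_abs, abs_sub_comm,
      abs_of_nonneg ((norm_nonneg x).trans hnorm_le)]
  refine le_antisymm ((pi_norm_le_iff_of_nonneg ((norm_nonneg x).trans hnorm_le)).mpr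
    fun i => ?_) (hcoord_j ▸ norm_le_pi_norm _ j)
  rcases eq_or_ne i j with rfl | hij
  · exact hcoord_j.le
  · rw [Pi.sub_apply, Pi.single_eq_of_ne hij, sub_zero]
    exact (norm_le_pi_norm x i).trans hnorm_le

theorem linf_neuron_negation_map_general (n : ℕ) (C : ℝ)
    (x : Fin n → ℝ) (hx : ‖x‖ ≤ C) (j : Fin n) (c : ℝ) :
    ‖x - (fun i => if i = j then 2 * C else 0)‖ - 2 * C + c = -(x j) + c := by
  have hxj : x j ≤ C := (le_abs_self _).trans ((norm_le_pi_norm x j).trans hx)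
  have hw : (fun i => if i = j then 2 * C else 0) = Pi.single j (2 * C) := by
    ext i
    rw [Pi.single_apply]
  rw [hw, Pi.norm_sub_single_eq_of_norm_add_le x j (by linarith)]
  ring

/-- Negation map realized by an ℓ∞-dist neuron: for `‖x‖_∞ ≤ C`, taking the
weight vector `w` with `w_j = 2C` and `w_i = 0` otherwise,
`‖x − w‖_∞ − 2C + c = −x_j + c`. -/
theorem linf_neuron_negation_map (n : ℕ) (C : ℝ) (hC : 0 < C)
    (x : Fin n → ℝ) (hx : ‖x‖ ≤ C) (j : Fin n) (c : ℝ) :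
    ‖x - (fun i => if i = j then 2 * C else 0)‖ - 2 * C + c = -(x j) + c :=
  linf_neuron_negation_map_general n C x hx j c
end

section
/- Let x ∈ ℝ^n with ‖x‖_∞ ≤ C, let j ≠ p be indices, and let w be a real constant with |w| ≤ C. Setting the parameter vector v by v_j = −w − 2C, v_p = −2C, and v_i = 0 otherwise, the ℓ∞-dist neuron output ‖x − v‖_∞ − 2C + c equals max{x_j + w, x_p} + c. -/
/-!
The shifts make coordinate `j` of `x - v` nonnegative and coordinate `p` at least `C`, while
every other coordinate stays in `[-C, C]`. So the sup norm of `x - v` is attained at `j` or `p`,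
and equals `max (x j + w) (x p) + 2C`.
-/

lemma pi_norm_eq_of_forall_abs_le_of_eq {ι : Type*} [Fintype ι] {f : ι → ℝ} {M : ℝ}
    (h : ∀ i, |f i| ≤ M) {k : ι} (hk : f k = M) : ‖f‖ = M := by
  have hM : 0 ≤ M := (abs_nonneg _).trans (h k)
  refine le_antisymm ((pi_norm_le_iff_of_nonneg hM).2 h) ?_
  calc M = f k := hk.symm
    _ ≤ |f k| := le_abs_self _
    _ ≤ ‖f‖ := norm_le_pi_norm f k

section MaxWeights

variable {ι : Type*} [DecidableEq ι]

/-- The parameter vector `v` of the ℓ∞-dist neuron computing `max (x j + w) (x p)`. -/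
def maxWeights (C w : ℝ) (j p : ι) : ι → ℝ :=
  fun i => if i = j then -w - 2 * C else if i = p then -2 * C else 0

variable {C w : ℝ} {j p : ι}

@[simp] lemma maxWeights_apply_left : maxWeights C w j p j = -w - 2 * C := if_pos rfl

lemma maxWeights_apply_right (hjp : j ≠ p) : maxWeights C w j p p = -2 * C := by
  simp [maxWeights, hjp.symm]

lemma maxWeights_apply_of_ne {i : ι} (hij : i ≠ j) (hip : i ≠ p) : maxWeights C w j p i = 0 := by
  simp [maxWeights, hij, hip]

lemma abs_sub_maxWeights_le {x : ι → ℝ} (hx : ∀ i, |x i| ≤ C) (hw : |w| ≤ C) (hjp : j ≠ p)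
    (i : ι) : |(x - maxWeights C w j p) i| ≤ max (x j + w) (x p) + 2 * C := by
  have hxj := abs_le.1 (hx j)
  have hxp := abs_le.1 (hx p)
  have hw' := abs_le.1 hw
  have hj := le_max_left (x j + w) (x p)
  have hp := le_max_right (x j + w) (x p)
  rw [Pi.sub_apply]
  by_cases hij : i = j
  · subst hij
    rw [maxWeights_apply_left, abs_of_nonneg (by linarith)]
    linarith
  by_cases hip : i = p
  · subst hip
    rw [maxWeights_apply_right hjp, abs_of_nonneg (by linarith)]
    linarith
  · rw [maxWeights_apply_of_ne hij hip, sub_zero]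
    linarith [hx i]

lemma norm_sub_maxWeights [Fintype ι] {x : ι → ℝ} (hx : ∀ i, |x i| ≤ C) (hw : |w| ≤ C)
    (hjp : j ≠ p) : ‖x - maxWeights C w j p‖ = max (x j + w) (x p) + 2 * C := by
  have hle := abs_sub_maxWeights_le hx hw hjp
  rcases max_choice (x j + w) (x p) with h | h
  · refine pi_norm_eq_of_forall_abs_le_of_eq hle (k := j) ?_
    rw [h, Pi.sub_apply, maxWeights_apply_left]
    ring
  · refine pi_norm_eq_of_forall_abs_le_of_eq hle (k := p) ?_
    rw [h, Pi.sub_apply, maxWeights_apply_right hjp]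
    ring

end MaxWeights

theorem linf_neuron_maximum_map_general (n : ℕ) (C : ℝ)
    (x : Fin n → ℝ) (hx : ‖x‖ ≤ C) (j p : Fin n) (hjp : j ≠ p)
    (w : ℝ) (hw : |w| ≤ C) (c : ℝ) :
    ‖x - (fun i => if i = j then -w - 2 * C else if i = p then -2 * C else 0)‖
        - 2 * C + c = max (x j + w) (x p) + c := by
  have hxi : ∀ i, |x i| ≤ C := fun i => (norm_le_pi_norm x i).trans hx
  change ‖x - maxWeights C w j p‖ - 2 * C + c = _
  rw [norm_sub_maxWeights hxi hw hjp]
  ring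

/-- Maximum map realized by an ℓ∞-dist neuron: for `‖x‖_∞ ≤ C`, `|w| ≤ C`,
`j ≠ p`, taking the parameter vector `v` with `v_j = −w − 2C`, `v_p = −2C` and
`v_i = 0` otherwise, `‖x − v‖_∞ − 2C + c = max{x_j + w, x_p} + c`. -/
theorem linf_neuron_maximum_map (n : ℕ) (C : ℝ) (hC : 0 < C)
    (x : Fin n → ℝ) (hx : ‖x‖ ≤ C) (j p : Fin n) (hjp : j ≠ p)
    (w : ℝ) (hw : |w| ≤ C) (c : ℝ) :
    ‖x - (fun i => if i = j then -w - 2 * C else if i = p then -2 * C else 0)‖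
        - 2 * C + c = max (x j + w) (x p) + c :=
  linf_neuron_maximum_map_general n C x hx j p hjp w hw c
end

section
/- For any 1-Lipschitz function g̃ : K → ℝ (with respect to ℓ∞ norm) on a bounded domain K ⊆ ℝ^{d} and any ε > 0, there exists an ℓ∞-dist net g with width at most d + 2 (and some finite depth) such that |g(x) − g̃(x)| ≤ ε for all x ∈ K. -/
/-- One ℓ∞-dist layer: coordinate `k` computes `‖x − w_k‖_∞ + b_k`. -/
def distLayer {d m : ℕ} (w : Fin m → Fin d → ℝ) (b : Fin m → ℝ)
    (x : Fin d → ℝ) : Fin m → ℝ :=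
  fun k => ‖x - w k‖ + b k

/-- An ℓ∞-dist net: composition of `L` ℓ∞-dist layers with given widths. -/
def distNet (dims : ℕ → ℕ)
    (w : ∀ l : ℕ, Fin (dims (l + 1)) → Fin (dims l) → ℝ)
    (b : ∀ l : ℕ, Fin (dims (l + 1)) → ℝ) :
    ∀ L : ℕ, (Fin (dims 0) → ℝ) → Fin (dims L) → ℝ
  | 0, x => x
  | L + 1, x => distLayer (w L) (b L) (distNet dims w b L x)

/-!
Since `g'` is 1-Lipschitz, on `K` it is `ε`-close to the maximum of the ℓ∞ pyramids
`g' pₙ - ‖x - pₙ‖` over an `ε/2`-net `(pₙ)` of `K`: every pyramid lies below `g' x`, and the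
one at a point `pₙ` next to `x` is at least `g' x - ε`.

A net of width `d + 2` computes this maximum one point at a time on states `(x, a, s)`.
The first `d` units of every layer copy `x`: once `B` dominates the input `y`, the unit with
weight `-B • eⱼ` and bias `-B` outputs `yⱼ`. Three layers per point `p` then replace the running
maximum `a` by `max a (c - ‖x - p‖)`; the scratch coordinate `s` carries
`‖x - p + Q‖ = Q + maxᵢ (xᵢ - pᵢ)` and then `max ‖x - p + Q‖ ‖x - p - Q‖ = ‖x - p‖ + Q`,
which is how an ℓ∞-dist unit can subtract a distance.
-/

section PiNorm

variable {ι : Type*} [Fintype ι]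

theorem abs_apply_le_norm (v : ι → ℝ) (i : ι) : |v i| ≤ ‖v‖ := by
  simpa only [Real.norm_eq_abs] using norm_le_pi_norm v i

theorem norm_sub_single_neg [DecidableEq ι] {y : ι → ℝ} {B : ℝ} (hy : 2 * ‖y‖ ≤ B) (j : ι) :
    ‖y - Pi.single j (-B)‖ = y j + B := by
  have hj := abs_le.1 (abs_apply_le_norm y j)
  have hpos : 0 ≤ y j + B := by linarith
  refine le_antisymm ((pi_norm_le_iff_of_nonneg hpos).2 fun i => ?_) ?_
  · rcases eq_or_ne i j with rfl | hi
    · simp [abs_of_nonneg hpos]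
    · simpa [hi] using (abs_apply_le_norm y i).trans (by linarith)
  · have := abs_apply_le_norm (y - Pi.single j (-B)) j
    rwa [Pi.sub_apply, Pi.single_eq_same, sub_neg_eq_add, abs_of_nonneg hpos] at this

theorem sub_norm_le_norm_add_const [Nonempty ι] (v : ι → ℝ) (Q : ℝ) :
    Q - ‖v‖ ≤ ‖v + fun _ => Q‖ := by
  obtain ⟨i⟩ := ‹Nonempty ι›
  have := abs_apply_le_norm (v + fun _ => Q) i
  simp only [Pi.add_apply] at this
  linarith [neg_abs_le (v i), le_abs_self (v i + Q), abs_apply_le_norm v i]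

theorem max_norm_add_const_norm_sub_const [Nonempty ι] (v : ι → ℝ) {Q : ℝ} (hQ : 0 ≤ Q) :
    max ‖v + fun _ => Q‖ ‖v - fun _ => Q‖ = ‖v‖ + Q := by
  have hnn : 0 ≤ ‖v‖ + Q := by positivity
  refine le_antisymm (max_le ?_ ?_) ?_
  · refine (pi_norm_le_iff_of_nonneg hnn).2 fun i => ?_
    simpa [abs_of_nonneg hQ] using
      (abs_add_le (v i) Q).trans (by rw [abs_of_nonneg hQ]; linarith [abs_apply_le_norm v i])
  · refine (pi_norm_le_iff_of_nonneg hnn).2 fun i => ?_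
    simpa [abs_of_nonneg hQ] using
      (abs_sub (v i) Q).trans (by rw [abs_of_nonneg hQ]; linarith [abs_apply_le_norm v i])
  · obtain ⟨i, hi : ‖v i‖ = ‖v‖⟩ := (IsGreatest.pi_norm v).1
    have hplus := abs_apply_le_norm (v + fun _ => Q) i
    have hminus := abs_apply_le_norm (v - fun _ => Q) i
    simp only [Pi.add_apply, Pi.sub_apply] at hplus hminus
    have hmax := max_le_max hplus hminus
    rw [← hi, Real.norm_eq_abs]
    rcases le_total 0 (v i) with h | h
    · rw [abs_of_nonneg h]; linarith [le_abs_self (v i + Q), le_max_left |v i + Q| |v i - Q|]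
    · rw [abs_of_nonpos h]; linarith [neg_abs_le (v i - Q), le_max_right |v i + Q| |v i - Q|]

end PiNorm

section AppendPair

variable {d : ℕ}

theorem norm_append_pair (x : Fin d → ℝ) (a s : ℝ) :
    ‖Fin.append x ![a, s]‖ = max ‖x‖ (max |a| |s|) := by
  refine le_antisymm ((pi_norm_le_iff_of_nonneg (by positivity)).2 fun i => ?_) ?_
  · refine Fin.addCases (fun j => ?_) (fun j => ?_) i
    · simpa using Or.inl (abs_apply_le_norm x j)
    · fin_cases j <;> simp
  · refine max_le ((pi_norm_le_iff_of_nonneg (norm_nonneg _)).2 fun j => ?_) (max_le ?_ ?_)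
    · simpa using norm_le_pi_norm (Fin.append x ![a, s]) (Fin.castAdd 2 j)
    · simpa using abs_apply_le_norm (Fin.append x ![a, s]) (Fin.natAdd d 0)
    · simpa using abs_apply_le_norm (Fin.append x ![a, s]) (Fin.natAdd d 1)

theorem norm_append_pair_le {x : Fin d → ℝ} {a s C : ℝ} (hx : ‖x‖ ≤ C) (ha : |a| ≤ C)
    (hs : |s| ≤ C) : ‖Fin.append x ![a, s]‖ ≤ C := by
  rw [norm_append_pair]
  exact max_le hx (max_le ha hs)

theorem append_pair_sub_append_pair (x p : Fin d → ℝ) (a s α σ : ℝ) :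
    Fin.append x ![a, s] - Fin.append p ![α, σ] = Fin.append (x - p) ![a - α, s - σ] := by
  funext i
  refine Fin.addCases (fun j => ?_) (fun j => ?_) i
  · simp
  · fin_cases j <;> simp

theorem append_pair_comp_castAdd (x : Fin d → ℝ) (a s : ℝ) :
    Fin.append x ![a, s] ∘ Fin.castAdd 2 = x := by
  funext i
  simp

theorem norm_append_pair_sub_single_neg {x : Fin d → ℝ} {a s B : ℝ}
    (hB : 2 * ‖Fin.append x ![a, s]‖ ≤ B) :
    ‖Fin.append x ![a, s] - Pi.single (Fin.natAdd d 0) (-B)‖ = a + B := by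
  rw [norm_sub_single_neg hB]
  simp

end AppendPair

section Pyramid

variable {α : Type*} [PseudoMetricSpace α]

def pyramidMax (a₀ : ℝ) (p : ℕ → α) (c : ℕ → ℝ) (x : α) : ℕ → ℝ
  | 0 => a₀
  | n + 1 => max (pyramidMax a₀ p c x n) (c n - dist x (p n))

variable {a₀ : ℝ} {p : ℕ → α} {c : ℕ → ℝ} {x : α}

theorem pyramidMax_le {y : ℝ} {n : ℕ} (h₀ : a₀ ≤ y) (h : ∀ k < n, c k - dist x (p k) ≤ y) :
    pyramidMax a₀ p c x n ≤ y := by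
  induction n with
  | zero => exact h₀
  | succ n ih => exact max_le (ih fun k hk => h k (by omega)) (h n n.lt_succ_self)

theorem le_pyramidMax {k n : ℕ} (hk : k < n) : c k - dist x (p k) ≤ pyramidMax a₀ p c x n := by
  induction n with
  | zero => omega
  | succ n ih =>
    rcases Nat.lt_succ_iff_lt_or_eq.1 hk with hk | rfl
    · exact (ih hk).trans (le_max_left _ _)
    · exact le_max_right _ _

theorem abs_pyramidMax_le {A : ℝ} {n : ℕ} (h₀ : |a₀| ≤ A)
    (h : ∀ k < n, |c k - dist x (p k)| ≤ A) : |pyramidMax a₀ p c x n| ≤ A := by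
  induction n with
  | zero => exact h₀
  | succ n ih =>
    exact abs_max_le_max_abs_abs.trans
      (max_le (ih fun k hk => h k (by omega)) (h n n.lt_succ_self))

theorem abs_pyramidMax_sub_le {K : Set α} {g : α → ℝ} (hg : LipschitzOnWith 1 g K) {n : ℕ}
    {ε : ℝ} (hp : ∀ k < n, p k ∈ K) (hx : x ∈ K) (h₀ : a₀ ≤ g x)
    (hcover : ∃ k < n, dist x (p k) ≤ ε / 2) :
    |pyramidMax a₀ p (g ∘ p) x n - g x| ≤ ε := by
  have hlip : ∀ k < n, |g x - g (p k)| ≤ dist x (p k) := fun k hk => by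
    simpa [Real.dist_eq] using hg.dist_le_mul x hx (p k) (hp k hk)
  obtain ⟨k, hk, hkx⟩ := hcover
  have hupper : pyramidMax a₀ p (g ∘ p) x n ≤ g x := pyramidMax_le h₀ fun j hj => by
    simp only [Function.comp_apply]
    linarith [neg_abs_le (g x - g (p j)), hlip j hj]
  have hlower : g (p k) - dist x (p k) ≤ pyramidMax a₀ p (g ∘ p) x n :=
    le_pyramidMax (c := g ∘ p) hk
  rw [abs_sub_le_iff]
  constructor <;> linarith [le_abs_self (g x - g (p k)), hlip k hk, dist_nonneg (x := x) (y := p k)]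

end Pyramid

theorem distLayer_cast {m n m' n' : ℕ} (hm : m' = m) (hn : n' = n) (w : Fin m → Fin n → ℝ)
    (b : Fin m → ℝ) (y : Fin n → ℝ) :
    distLayer (fun k i => w (Fin.cast hm k) (Fin.cast hn i)) (fun k => b (Fin.cast hm k))
      (y ∘ Fin.cast hn) = distLayer w b y ∘ Fin.cast hm := by
  subst hm hn
  rfl

theorem exists_distNet_eq_stack {d W : ℕ} (hdW : d ≤ W) (hW : 1 ≤ W) (w₀ : Fin W → Fin d → ℝ)
    (b₀ : Fin W → ℝ) (w : ℕ → Fin W → Fin W → ℝ) (b : ℕ → Fin W → ℝ) (N : ℕ) (v : Fin W → ℝ)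
    (β : ℝ) :
    ∃ (L : ℕ) (dims : ℕ → ℕ) (h0 : dims 0 = d) (_ : dims L = 1) (_ : ∀ l ≤ L, dims l ≤ W)
      (w' : ∀ l : ℕ, Fin (dims (l + 1)) → Fin (dims l) → ℝ)
      (b' : ∀ l : ℕ, Fin (dims (l + 1)) → ℝ),
      ∀ (x : Fin d → ℝ) (k : Fin (dims L)),
        distNet dims w' b' L (fun i => x (Fin.cast h0 i)) k =
          ‖distNet (fun _ => W) w b N (distLayer w₀ b₀ x) - v‖ + β := by
  let dims : ℕ → ℕ := fun l => if l = 0 then d else if l ≤ N + 1 then W else 1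
  have h0 : dims 0 = d := if_pos rfl
  have hdims : ∀ l, 0 < l → l ≤ N + 1 → dims l = W := fun l h₁ h₂ => by
    simp only [dims]
    split_ifs <;> omega
  let w' : ∀ l : ℕ, Fin (dims (l + 1)) → Fin (dims l) → ℝ
    | 0 => fun k i => w₀ (Fin.cast (hdims 1 one_pos (by omega)) k) (Fin.cast h0 i)
    | l + 1 =>
      if h : l < N then fun k i =>
        w l (Fin.cast (hdims (l + 2) (by omega) (by omega)) k)
          (Fin.cast (hdims (l + 1) (by omega) (by omega)) i)
      else if h' : l = N then fun _ i => v (Fin.cast (hdims (l + 1) (by omega) (by omega)) i)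
      else 0
  let b' : ∀ l : ℕ, Fin (dims (l + 1)) → ℝ
    | 0 => fun k => b₀ (Fin.cast (hdims 1 one_pos (by omega)) k)
    | l + 1 =>
      if h : l < N then fun k => b l (Fin.cast (hdims (l + 2) (by omega) (by omega)) k)
      else fun _ => β
  refine ⟨N + 2, dims, h0, by simp [dims], fun l _ => by simp only [dims]; split_ifs <;> omega,
    w', b', fun x k => ?_⟩
  have hstack : ∀ l ≤ N, ∀ h : dims (l + 1) = W,
      distNet dims w' b' (l + 1) (fun i => x (Fin.cast h0 i)) =
        distNet (fun _ => W) w b l (distLayer w₀ b₀ x) ∘ Fin.cast h := by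
    intro l hl h
    induction l with
    | zero => exact distLayer_cast _ h0 w₀ b₀ x
    | succ l ih =>
      rw [distNet, ih (by omega) (hdims _ (by omega) (by omega))]
      simp only [w', b', dif_pos (show l < N by omega)]
      exact distLayer_cast _ _ (w l) (b l) _
  rw [distNet, hstack N le_rfl (hdims _ (by omega) le_rfl)]
  simp only [w', b', dif_neg (lt_irrefl N), dite_true]
  exact congrFun (distLayer_cast (m := 1) (by simp [dims]) _ (fun _ => v) (fun _ => β) _) k

section Layers

variable {d n : ℕ}

def copyWeights (ι : Fin d → Fin n) (B : ℝ) (w₀ w₁ : Fin n → ℝ) : Fin (d + 2) → Fin n → ℝ :=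
  Fin.append (fun j => Pi.single (ι j) (-B)) ![w₀, w₁]

def copyBiases (d : ℕ) (B b₀ b₁ : ℝ) : Fin (d + 2) → ℝ :=
  Fin.append (fun _ => -B) ![b₀, b₁]

theorem distLayer_copy (ι : Fin d → Fin n) {B : ℝ} (w₀ w₁ : Fin n → ℝ) (b₀ b₁ : ℝ)
    {y : Fin n → ℝ} (hy : 2 * ‖y‖ ≤ B) :
    distLayer (copyWeights ι B w₀ w₁) (copyBiases d B b₀ b₁) y =
      Fin.append (y ∘ ι) ![‖y - w₀‖ + b₀, ‖y - w₁‖ + b₁] := by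
  funext k
  refine Fin.addCases (fun j => ?_) (fun j => ?_) k
  · simp [distLayer, copyWeights, copyBiases, norm_sub_single_neg hy]
  · fin_cases j <;> simp [distLayer, copyWeights, copyBiases]

end Layers

section Stages

variable {d : ℕ} (B Q : ℝ)

def stageWeights (p : Fin d → ℝ) (c : ℝ) : ℕ → Fin (d + 2) → Fin (d + 2) → ℝ
  | 0 => copyWeights (Fin.castAdd 2) B (Pi.single (Fin.natAdd d 0) (-B))
      (Fin.append (fun i => p i - Q) ![0, 0])
  | 1 => copyWeights (Fin.castAdd 2) B (Pi.single (Fin.natAdd d 0) (-B))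
      (Fin.append (fun i => p i + Q) ![0, 0])
  | _ + 2 => copyWeights (Fin.castAdd 2) B (Fin.append 0 ![-B, B + Q + c])
      (Fin.append 0 ![-B, B + Q + c])

def stageBiases (d : ℕ) : ℕ → Fin (d + 2) → ℝ
  | 0 | 1 => copyBiases d B (-B) 0
  | _ + 2 => copyBiases d B (-B) (-B)

def stackWeights (p : ℕ → Fin d → ℝ) (c : ℕ → ℝ) (l : ℕ) : Fin (d + 2) → Fin (d + 2) → ℝ :=
  stageWeights B Q (p (l / 3)) (c (l / 3)) (l % 3)

def stackBiases (d l : ℕ) : Fin (d + 2) → ℝ :=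
  stageBiases B d (l % 3)

variable {B Q} {x p : Fin d → ℝ} {a s : ℝ}

theorem distLayer_stage_zero [Nonempty (Fin d)] (c : ℝ) (hB : 2 * ‖Fin.append x ![a, s]‖ ≤ B)
    (ha : |a| + ‖x - p‖ ≤ Q) (hs : |s| + ‖x - p‖ ≤ Q) :
    distLayer (stageWeights B Q p c 0) (stageBiases B d 0) (Fin.append x ![a, s]) =
      Fin.append x ![a, ‖x - p + fun _ => Q‖] := by
  have hshift : x - (fun i => p i - Q) = x - p + fun _ => Q := by
    funext i
    simp only [Pi.sub_apply, Pi.add_apply]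
    ring
  have hu := sub_norm_le_norm_add_const (x - p) Q
  rw [stageWeights, stageBiases, distLayer_copy _ _ _ _ _ hB, append_pair_comp_castAdd,
    norm_append_pair_sub_single_neg hB, append_pair_sub_append_pair, norm_append_pair, hshift,
    sub_zero, sub_zero, max_eq_left (max_le (by linarith) (by linarith))]
  simp

theorem distLayer_stage_one [Nonempty (Fin d)] (c : ℝ)
    (hB : 2 * ‖Fin.append x ![a, ‖x - p + fun _ => Q‖]‖ ≤ B) (ha : |a| + ‖x - p‖ ≤ Q) :
    distLayer (stageWeights B Q p c 1) (stageBiases B d 1)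
        (Fin.append x ![a, ‖x - p + fun _ => Q‖]) =
      Fin.append x ![a, ‖x - p‖ + Q] := by
  have hshift : x - (fun i => p i + Q) = x - p - fun _ => Q := by
    funext i
    simp only [Pi.sub_apply]
    ring
  have hu := sub_norm_le_norm_add_const (x - p) Q
  rw [stageWeights, stageBiases, distLayer_copy _ _ _ _ _ hB, append_pair_comp_castAdd,
    norm_append_pair_sub_single_neg hB, append_pair_sub_append_pair, norm_append_pair, hshift,
    sub_zero, sub_zero, abs_norm, max_eq_right (show |a| ≤ ‖x - p + fun _ => Q‖ by linarith),
    max_comm, max_norm_add_const_norm_sub_const _ (by linarith [abs_nonneg a, norm_nonneg (x - p)])]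
  simp

theorem distLayer_stage_two {c : ℝ} (hB : 2 * ‖Fin.append x ![a, ‖x - p‖ + Q]‖ ≤ B)
    (hc : |c| ≤ Q) :
    distLayer (stageWeights B Q p c 2) (stageBiases B d 2) (Fin.append x ![a, ‖x - p‖ + Q]) =
      Fin.append x ![max a (c - ‖x - p‖), max a (c - ‖x - p‖)] := by
  have hbounds := hB
  rw [norm_append_pair, mul_max_of_nonneg _ _ zero_le_two, mul_max_of_nonneg _ _ zero_le_two,
    max_le_iff, max_le_iff] at hbounds
  obtain ⟨hx, ha, hr⟩ := hbounds
  rw [abs_le] at hc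
  have hunit : ‖Fin.append x ![a, ‖x - p‖ + Q] - Fin.append 0 ![-B, B + Q + c]‖ + -B =
      max a (c - ‖x - p‖) := by
    rw [append_pair_sub_append_pair, norm_append_pair, sub_zero, sub_neg_eq_add,
      abs_of_nonneg (by linarith [neg_abs_le a, abs_nonneg a]),
      abs_of_nonpos (by linarith [le_abs_self (‖x - p‖ + Q), norm_nonneg (x - p)]),
      show -(‖x - p‖ + Q - (B + Q + c)) = c - ‖x - p‖ + B by ring, max_add_add_right,
      max_eq_right (by linarith [neg_abs_le a, le_max_left a (c - ‖x - p‖)])]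
    ring
  rw [stageWeights, stageBiases, distLayer_copy _ _ _ _ _ hB, append_pair_comp_castAdd, hunit]

theorem distLayer_stages [Nonempty (Fin d)] {A D c : ℝ} (hxp : ‖x - p‖ ≤ D) (ha : |a| ≤ A)
    (hs : |s| ≤ A) (hc : |c| ≤ Q) (hQ : A + D ≤ Q) (hB : 2 * (‖x‖ + Q + D) ≤ B) :
    distLayer (stageWeights B Q p c 2) (stageBiases B d 2)
        (distLayer (stageWeights B Q p c 1) (stageBiases B d 1)
          (distLayer (stageWeights B Q p c 0) (stageBiases B d 0) (Fin.append x ![a, s]))) =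
      Fin.append x ![max a (c - ‖x - p‖), max a (c - ‖x - p‖)] := by
  have hv := norm_nonneg (x - p)
  have hQ0 : 0 ≤ Q := by linarith [abs_nonneg a]
  have hu : ‖x - p + fun _ => Q‖ ≤ ‖x - p‖ + Q :=
    (norm_add_le _ _).trans (by simp [abs_of_nonneg hQ0])
  have hbound : ∀ {t : ℝ}, |t| ≤ Q + D → 2 * ‖Fin.append x ![a, t]‖ ≤ B := fun ht => by
    have := norm_append_pair_le (x := x) (a := a) (C := ‖x‖ + Q + D) (by linarith)
      (by linarith [norm_nonneg x]) (by linarith [norm_nonneg x])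
    linarith
  rw [distLayer_stage_zero c (hbound (by linarith)) (by linarith) (by linarith),
    distLayer_stage_one c (hbound (by rw [abs_norm]; linarith)) (by linarith),
    distLayer_stage_two (hbound (by rw [abs_of_nonneg (by positivity)]; linarith)) hc]

theorem distNet_stack_eq_pyramidMax [Nonempty (Fin d)] {A D a₀ : ℝ} {p : ℕ → Fin d → ℝ}
    {c : ℕ → ℝ} {N : ℕ} (hxp : ∀ n < N, ‖x - p n‖ ≤ D)
    (hpm : ∀ n ≤ N, |pyramidMax a₀ p c x n| ≤ A) (hc : ∀ n < N, |c n| ≤ Q) (hQ : A + D ≤ Q)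
    (hB : 2 * (‖x‖ + Q + D) ≤ B) {n : ℕ} (hn : n ≤ N) :
    distNet (fun _ => d + 2) (stackWeights B Q p c) (stackBiases B d) (3 * n)
        (Fin.append x ![a₀, a₀]) =
      Fin.append x ![pyramidMax a₀ p c x n, pyramidMax a₀ p c x n] := by
  induction n with
  | zero => rfl
  | succ n ih =>
    have hlayers : ∀ i < 3, (3 * n + i) / 3 = n ∧ (3 * n + i) % 3 = i := by omega
    change distLayer (stackWeights B Q p c (3 * n + 2)) (stackBiases B d (3 * n + 2))
      (distLayer (stackWeights B Q p c (3 * n + 1)) (stackBiases B d (3 * n + 1))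
        (distLayer (stackWeights B Q p c (3 * n + 0)) (stackBiases B d (3 * n + 0))
          (distNet (fun _ => d + 2) (stackWeights B Q p c) (stackBiases B d) (3 * n)
            (Fin.append x ![a₀, a₀])))) = _
    simp only [stackWeights, stackBiases, hlayers 0 (by omega), hlayers 1 (by omega),
      hlayers 2 (by omega), ih (by omega)]
    rw [distLayer_stages (hxp n hn) (hpm n (by omega)) (hpm n (by omega)) (hc n hn) hQ hB,
      pyramidMax, dist_eq_norm]

end Stages

theorem exists_distNet_eq_pyramidMax {d : ℕ} [Nonempty (Fin d)] {R G : ℝ} (hG : 0 ≤ G) (N : ℕ)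
    (p : ℕ → Fin d → ℝ) (c : ℕ → ℝ) (hp : ∀ n < N, ‖p n‖ ≤ R) (hc : ∀ n < N, |c n| ≤ G) :
    ∃ (L : ℕ) (dims : ℕ → ℕ) (h0 : dims 0 = d) (_ : dims L = 1)
      (_ : ∀ l ≤ L, dims l ≤ d + 2)
      (w : ∀ l : ℕ, Fin (dims (l + 1)) → Fin (dims l) → ℝ)
      (b : ∀ l : ℕ, Fin (dims (l + 1)) → ℝ),
      ∀ x : Fin d → ℝ, ‖x‖ ≤ R → ∀ k : Fin (dims L),
        distNet dims w b L (fun i => x (Fin.cast h0 i)) k =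
          pyramidMax (‖x‖ - (R + G)) p c x N := by
  set A := G + 2 * R
  set Q := A + 2 * R
  set B := 2 * (R + Q + 2 * R)
  -- A unit cannot output a constant, so the running maximum starts at `‖x‖ - (R + G) ≤ -G`.
  obtain ⟨L, dims, h0, hL, hW, w, b, hnet⟩ := exists_distNet_eq_stack (by omega) (by omega)
    (copyWeights id B 0 0) (copyBiases d B (-(R + G)) (-(R + G)))
    (stackWeights B Q p c) (stackBiases B d) (3 * N) (Pi.single (Fin.natAdd d 0) (-B)) (-B)
  refine ⟨L, dims, h0, hL, hW, w, b, fun x hx k => ?_⟩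
  have hR : 0 ≤ R := (norm_nonneg x).trans hx
  have hxp : ∀ n < N, ‖x - p n‖ ≤ 2 * R := fun n hn => by
    linarith [norm_sub_le x (p n), hp n hn]
  have hpm : ∀ n ≤ N, |pyramidMax (‖x‖ - (R + G)) p c x n| ≤ A := fun n hn =>
    abs_pyramidMax_le (by rw [abs_le]; constructor <;> linarith [norm_nonneg x]) fun k hk => by
      have := abs_le.1 (hc k (by omega))
      rw [abs_le, dist_eq_norm]
      constructor <;> linarith [hxp k (by omega), norm_nonneg (x - p k)]
  have hstate := norm_append_pair_le (x := x) (C := R + Q + 2 * R) (by linarith)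
    (by linarith [hpm N le_rfl]) (by linarith [hpm N le_rfl])
  rw [hnet, distLayer_copy _ _ _ _ _ (by linarith), Function.comp_id, sub_zero,
    ← sub_eq_add_neg ‖x‖, distNet_stack_eq_pyramidMax hxp hpm
      (fun n hn => by linarith [hc n hn]) le_rfl (by linarith) le_rfl,
    norm_append_pair_sub_single_neg (by linarith)]
  ring

theorem LipschitzOnWith.isBounded_image {α β : Type*} [PseudoMetricSpace α]
    [PseudoMetricSpace β] {K : NNReal} {f : α → β} {s : Set α} (hf : LipschitzOnWith K f s)
    (hs : Bornology.IsBounded s) : Bornology.IsBounded (f '' s) := by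
  obtain ⟨C, hC⟩ := Metric.isBounded_iff.1 hs
  exact Metric.isBounded_image_iff.2 ⟨K * C, fun x hx y hy =>
    (hf.dist_le_mul x hx y hy).trans (by gcongr; exact hC hx hy)⟩

theorem TotallyBounded.exists_seq_forall_exists_dist_lt {α : Type*} [PseudoMetricSpace α]
    [Inhabited α] {s : Set α} (hs : TotallyBounded s) {δ : ℝ} (hδ : 0 < δ) :
    ∃ (N : ℕ) (p : ℕ → α), (∀ n < N, p n ∈ s) ∧ ∀ x ∈ s, ∃ n < N, dist x (p n) < δ := by
  obtain ⟨t, hts, ht, hcover⟩ := Metric.finite_approx_of_totallyBounded hs δ hδ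
  let l := ht.toFinset.toList
  refine ⟨l.length, fun n => l.getD n default, fun n hn => ?_, fun x hx => ?_⟩
  · show l.getD n default ∈ s
    rw [List.getD_eq_getElem _ _ hn]
    exact hts (ht.mem_toFinset.1 (Finset.mem_toList.1 (List.getElem_mem hn)))
  · obtain ⟨y, hy, hxy⟩ := Set.mem_iUnion₂.1 (hcover hx)
    obtain ⟨n, hn, rfl⟩ := List.mem_iff_getElem.1 (Finset.mem_toList.2 (ht.mem_toFinset.2 hy))
    refine ⟨n, hn, ?_⟩
    show dist x (l.getD n default) < δ
    rwa [List.getD_eq_getElem _ _ hn]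

theorem exists_distNet_const_of_dim_zero (c : ℝ) :
    ∃ (L : ℕ) (dims : ℕ → ℕ) (h0 : dims 0 = 0) (_ : dims L = 1) (_ : ∀ l ≤ L, dims l ≤ 0 + 2)
      (w : ∀ l : ℕ, Fin (dims (l + 1)) → Fin (dims l) → ℝ)
      (b : ∀ l : ℕ, Fin (dims (l + 1)) → ℝ),
      ∀ (x : Fin 0 → ℝ) (k : Fin (dims L)),
        distNet dims w b L (fun i => x (Fin.cast h0 i)) k = c := by
  obtain ⟨L, dims, h0, hL, hW, w, b, hnet⟩ :=
    exists_distNet_eq_stack (d := 0) (W := 2) (by omega) (by omega) 0 0 0 0 0 0 c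
  have hzero : ∀ x : Fin 0 → ℝ, distLayer (0 : Fin 2 → Fin 0 → ℝ) 0 x = 0 := fun x => by
    funext j
    simp [distLayer]
  exact ⟨L, dims, h0, hL, hW, w, b, fun x k => by
    rw [hnet, distNet, hzero, sub_zero, norm_zero, zero_add]⟩

/-- Lipschitz-universal approximation: any 1-Lipschitz (w.r.t. ℓ∞) function on a
bounded domain `K ⊆ ℝ^d` can be `ε`-approximated on `K` by an ℓ∞-dist net of
width at most `d + 2` and scalar output. -/
theorem linf_dist_net_universal_approx (d : ℕ) (K : Set (Fin d → ℝ))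
    (hK : Bornology.IsBounded K) (g' : (Fin d → ℝ) → ℝ)
    (hg : LipschitzOnWith 1 g' K) (ε : ℝ) (hε : 0 < ε) :
    ∃ (L : ℕ) (dims : ℕ → ℕ) (h0 : dims 0 = d) (_ : dims L = 1)
      (_ : ∀ l ≤ L, dims l ≤ d + 2)
      (w : ∀ l : ℕ, Fin (dims (l + 1)) → Fin (dims l) → ℝ)
      (b : ∀ l : ℕ, Fin (dims (l + 1)) → ℝ),
      ∀ x ∈ K, ∀ k : Fin (dims L),
        |distNet dims w b L (fun i => x (Fin.cast h0 i)) k - g' x| ≤ ε := by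
  rcases Nat.eq_zero_or_pos d with rfl | hd
  · -- `‖v + Q‖ ⊔ ‖v - Q‖ = ‖v‖ + Q` fails for `v : Fin 0 → ℝ`, but then `K` has at most one point.
    obtain ⟨L, dims, h0, hL, hW, w, b, hnet⟩ := exists_distNet_const_of_dim_zero (g' 0)
    exact ⟨L, dims, h0, hL, hW, w, b, fun x _ k => by simp [hnet, Subsingleton.elim x 0, hε.le]⟩
  have : Nonempty (Fin d) := ⟨⟨0, hd⟩⟩
  obtain ⟨R, hR⟩ := isBounded_iff_forall_norm_le.1 hK
  obtain ⟨G, hG⟩ := isBounded_iff_forall_norm_le.1 (hg.isBounded_image hK)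
  obtain ⟨N, p, hpK, hcover⟩ := (hK.isCompact_closure.totallyBounded.subset
    subset_closure).exists_seq_forall_exists_dist_lt (half_pos hε)
  obtain ⟨L, dims, h0, hL, hW, w, b, hnet⟩ := exists_distNet_eq_pyramidMax (le_max_right G 0)
    N p (g' ∘ p) (fun n hn => hR _ (hpK n hn))
    (fun n hn => (hG _ ⟨p n, hpK n hn, rfl⟩).trans (le_max_left _ _))
  refine ⟨L, dims, h0, hL, hW, w, b, fun x hx k => ?_⟩
  obtain ⟨n, hn, hxn⟩ := hcover x hx
  rw [hnet x (hR x hx)]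
  refine abs_pyramidMax_sub_le hg hpK hx ?_ ⟨n, hn, hxn.le⟩
  linarith [hR x hx, neg_le_of_abs_le ((hG _ ⟨x, hx, rfl⟩).trans (le_max_left G 0))]
end
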